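/- For the parameterized rotation F(θ) = ⟨ψ| R_X(θ)^H H R_X(θ) |ψ⟩ with R_X(θ) = cos(θ/2) I - i sin(θ/2) X (where X is the Pauli-X matrix), the parameter shift rule holds: F'(θ) = (1/2)(F(θ + π/2) - F(θ − π/2)). -/
import Mathlib


open Matrix Real

/-- The single-qubit X-rotation gate `R_X(θ) = cos(θ/2) I − i sin(θ/2) X`. -/
noncomputable def RX (θ : ℝ) : Matrix (Fin 2) (Fin 2) ℂ :=
  !![(Real.cos (θ / 2) : ℂ), -Complex.I * (Real.sin (θ / 2) : ℂ);
     -Complex.I * (Real.sin (θ / 2) : ℂ), (Real.cos (θ / 2) : ℂ)]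

/-- Expectation of observable `H` in the state `R_X(θ) ψ`. -/
noncomputable def Fexp (H : Matrix (Fin 2) (Fin 2) ℂ) (ψ : Fin 2 → ℂ) (θ : ℝ) : ℝ :=
  (star ((RX θ).mulVec ψ) ⬝ᵥ H.mulVec ((RX θ).mulVec ψ)).re

lemma key (H : Matrix (Fin 2) (Fin 2) ℂ) (ψ : Fin 2 → ℂ) (x : ℝ) :
    star ((RX x).mulVec ψ) ⬝ᵥ H.mulVec ((RX x).mulVec ψ) =
      ((starRingEnd ℂ (ψ 0) * (H 0 0 * ψ 0 + H 0 1 * ψ 1)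
          + starRingEnd ℂ (ψ 1) * (H 1 0 * ψ 0 + H 1 1 * ψ 1))
        + (starRingEnd ℂ (ψ 1) * (H 0 0 * ψ 1 + H 0 1 * ψ 0)
          + starRingEnd ℂ (ψ 0) * (H 1 0 * ψ 1 + H 1 1 * ψ 0))) / 2
      + ((starRingEnd ℂ (ψ 0) * (H 0 0 * ψ 0 + H 0 1 * ψ 1)
          + starRingEnd ℂ (ψ 1) * (H 1 0 * ψ 0 + H 1 1 * ψ 1))
        - (starRingEnd ℂ (ψ 1) * (H 0 0 * ψ 1 + H 0 1 * ψ 0)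
          + starRingEnd ℂ (ψ 0) * (H 1 0 * ψ 1 + H 1 1 * ψ 0))) / 2 * (Real.cos x : ℂ)
      + (Complex.I * (H 0 0 * (starRingEnd ℂ (ψ 1) * ψ 0 - starRingEnd ℂ (ψ 0) * ψ 1)
          + H 0 1 * (starRingEnd ℂ (ψ 1) * ψ 1 - starRingEnd ℂ (ψ 0) * ψ 0)
          + H 1 0 * (starRingEnd ℂ (ψ 0) * ψ 0 - starRingEnd ℂ (ψ 1) * ψ 1)
          + H 1 1 * (starRingEnd ℂ (ψ 0) * ψ 1 - starRingEnd ℂ (ψ 1) * ψ 0))) / 2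
          * (Real.sin x : ℂ) := by
  have hcr : Real.cos x = 2 * Real.cos (x/2)^2 - 1 := by
    have := Real.cos_two_mul (x/2); rw [show 2*(x/2) = x by ring] at this; linarith
  have hsr : Real.sin x = 2 * Real.sin (x/2) * Real.cos (x/2) := by
    have := Real.sin_two_mul (x/2); rw [show 2*(x/2) = x by ring] at this; linarith
  have hc : (Real.cos x : ℂ) = 2 * (Real.cos (x/2) : ℂ)^2 - 1 := by
    rw [hcr]; push_cast [-Complex.ofReal_cos]; ring
  have hs : (Real.sin x : ℂ) = 2 * (Real.sin (x/2) : ℂ) * (Real.cos (x/2) : ℂ) := by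
    rw [hsr]; push_cast [-Complex.ofReal_cos, -Complex.ofReal_sin]; ring
  have h1 : (Real.sin (x/2) : ℂ)^2 + (Real.cos (x/2) : ℂ)^2 = 1 := by
    push_cast [-Complex.ofReal_cos, -Complex.ofReal_sin, ← Complex.ofReal_pow]
    norm_cast; exact Real.sin_sq_add_cos_sq _
  rw [hc, hs]
  simp [RX, mulVec, dotProduct, Fin.sum_univ_two, -Complex.ofReal_cos, -Complex.ofReal_sin]
  linear_combination (starRingEnd ℂ (ψ 1) * (H 0 0 * ψ 1 + H 0 1 * ψ 0)
          + starRingEnd ℂ (ψ 0) * (H 1 0 * ψ 1 + H 1 1 * ψ 0)) * h1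
    - (Real.sin (x/2) : ℂ)^2 * (starRingEnd ℂ (ψ 0) * (ψ 0 * H 1 1 + ψ 1 * H 1 0)
        + starRingEnd ℂ (ψ 1) * (H 0 0 * ψ 1 + ψ 0 * H 0 1)) * Complex.I_sq

theorem stmt8 (H : Matrix (Fin 2) (Fin 2) ℂ) (hH : H.IsHermitian)
    (ψ : Fin 2 → ℂ) (θ : ℝ) :
    HasDerivAt (Fexp H ψ)
      ((1 / 2) * (Fexp H ψ (θ + π / 2) - Fexp H ψ (θ - π / 2))) θ := by
  set A : ℂ := ((starRingEnd ℂ (ψ 0) * (H 0 0 * ψ 0 + H 0 1 * ψ 1)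
          + starRingEnd ℂ (ψ 1) * (H 1 0 * ψ 0 + H 1 1 * ψ 1))
        + (starRingEnd ℂ (ψ 1) * (H 0 0 * ψ 1 + H 0 1 * ψ 0)
          + starRingEnd ℂ (ψ 0) * (H 1 0 * ψ 1 + H 1 1 * ψ 0))) / 2 with hA
  set B : ℂ := ((starRingEnd ℂ (ψ 0) * (H 0 0 * ψ 0 + H 0 1 * ψ 1)
          + starRingEnd ℂ (ψ 1) * (H 1 0 * ψ 0 + H 1 1 * ψ 1))
        - (starRingEnd ℂ (ψ 1) * (H 0 0 * ψ 1 + H 0 1 * ψ 0)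
          + starRingEnd ℂ (ψ 0) * (H 1 0 * ψ 1 + H 1 1 * ψ 0))) / 2 with hB
  set C : ℂ := (Complex.I * (H 0 0 * (starRingEnd ℂ (ψ 1) * ψ 0 - starRingEnd ℂ (ψ 0) * ψ 1)
          + H 0 1 * (starRingEnd ℂ (ψ 1) * ψ 1 - starRingEnd ℂ (ψ 0) * ψ 0)
          + H 1 0 * (starRingEnd ℂ (ψ 0) * ψ 0 - starRingEnd ℂ (ψ 1) * ψ 1)
          + H 1 1 * (starRingEnd ℂ (ψ 0) * ψ 1 - starRingEnd ℂ (ψ 1) * ψ 0))) / 2 with hC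
  have hf : ∀ x : ℝ, Fexp H ψ x = A.re + B.re * Real.cos x + C.re * Real.sin x := by
    intro x
    rw [Fexp, key H ψ x, ← hA, ← hB, ← hC]
    simp [Complex.add_re, Complex.mul_re, Complex.ofReal_re, Complex.ofReal_im,
      Complex.cos_ofReal_re, Complex.sin_ofReal_re]
  have hd : HasDerivAt (fun x : ℝ => A.re + B.re * Real.cos x + C.re * Real.sin x)
      (B.re * (-Real.sin θ) + C.re * Real.cos θ) θ := by
    exact (((Real.hasDerivAt_cos θ).const_mul B.re).const_add A.re).add
      ((Real.hasDerivAt_sin θ).const_mul C.re)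
  have : Fexp H ψ = fun x => A.re + B.re * Real.cos x + C.re * Real.sin x := funext hf
  rw [this]
  convert hd using 1
  simp only [Real.cos_add, Real.sin_add, Real.cos_sub, Real.sin_sub, Real.cos_pi_div_two,
    Real.sin_pi_div_two]
  ring
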